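/- The type checking transition system is terminating: there is no infinite sequence of transitions (Ψ, σ) → (Ψ', σ') → ⋯ of the type checking algorithm, because each transition rule is defined by recursion on the structure of the expressions e and the goal types T in the tuples of Ψ, each step strictly decreasing the combined structural size of the expression–type pairs being checked. -/

import Mathlib

namespace Paper

/-! ## Types of System F_ω

Type variables are partitioned into *free variables* (`fvar`, substitutable) and
*eigenvariables* (`evar`, not substitutable).  Binders (`all`, `lam`) bind
eigenvariable names. -/

inductive Ty : Type
  | const : ℕ → Ty
  | fvar : ℕ → Ty
  | evar : ℕ → Ty
  | all : ℕ → Ty → Ty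
  | arrow : Ty → Ty → Ty
  | app : Ty → Ty → Ty
  | lam : ℕ → Ty → Ty
  deriving DecidableEq

namespace Ty

/-- free variables of a type -/
def FV : Ty → Finset ℕ
  | const _ => ∅
  | fvar a => {a}
  | evar _ => ∅
  | all _ T => FV T
  | arrow T₁ T₂ => FV T₁ ∪ FV T₂
  | app T₁ T₂ => FV T₁ ∪ FV T₂
  | lam _ T => FV T

/-- eigenvariables occurring (free) in a type -/
def EV : Ty → Finset ℕ
  | const _ => ∅
  | fvar _ => ∅
  | evar a => {a}
  | all a T => EV T \ {a}
  | arrow T₁ T₂ => EV T₁ ∪ EV T₂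
  | app T₁ T₂ => EV T₁ ∪ EV T₂
  | lam a T => EV T \ {a}

/-- substitute `S` for the free variable `a` : `[S/a]T` -/
def substF (a : ℕ) (S : Ty) : Ty → Ty
  | const c => const c
  | fvar b => if b = a then S else fvar b
  | evar b => evar b
  | all b T => all b (substF a S T)
  | arrow T₁ T₂ => arrow (substF a S T₁) (substF a S T₂)
  | app T₁ T₂ => app (substF a S T₁) (substF a S T₂)
  | lam b T => lam b (substF a S T)

/-- substitute `S` for the eigenvariable `a` (used to open binders and for β) -/
def substE (a : ℕ) (S : Ty) : Ty → Ty
  | const c => const c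
  | fvar b => fvar b
  | evar b => if b = a then S else evar b
  | all b T => if b = a then all b T else all b (substE a S T)
  | arrow T₁ T₂ => arrow (substE a S T₁) (substE a S T₂)
  | app T₁ T₂ => app (substE a S T₁) (substE a S T₂)
  | lam b T => if b = a then lam b T else lam b (substE a S T)

/-- structural size of a type -/
def size : Ty → ℕ
  | const _ => 1
  | fvar _ => 1
  | evar _ => 1
  | all _ T => T.size + 1
  | arrow T₁ T₂ => T₁.size + T₂.size + 1
  | app T₁ T₂ => T₁.size + T₂.size + 1
  | lam _ T => T.size + 1

end Ty

/-- type equivalence, generated by the β-rule `(λa.T) T' = [T'/a]T` -/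
inductive TyEq : Ty → Ty → Prop
  | refl (T) : TyEq T T
  | symm {T T'} : TyEq T T' → TyEq T' T
  | trans {T₁ T₂ T₃} : TyEq T₁ T₂ → TyEq T₂ T₃ → TyEq T₁ T₃
  | beta (a T S) : TyEq (.app (.lam a T) S) (T.substE a S)
  | allCongr (a) {T T'} : TyEq T T' → TyEq (.all a T) (.all a T')
  | arrowCongr {T₁ T₁' T₂ T₂'} :
      TyEq T₁ T₁' → TyEq T₂ T₂' → TyEq (.arrow T₁ T₂) (.arrow T₁' T₂')
  | appCongr {T₁ T₁' T₂ T₂'} :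
      TyEq T₁ T₁' → TyEq T₂ T₂' → TyEq (.app T₁ T₂) (.app T₁' T₂')
  | lamCongr (a) {T T'} : TyEq T T' → TyEq (.lam a T) (.lam a T')

/-! ## Substitutions -/

/-- A substitution is a finite collection of bindings `[T/a]` of types for free
variables (composition `σ'·σ` is accumulation). -/
abbrev Subst := List (ℕ × Ty)

/-- domain of a substitution -/
def Subst.dom (σ : Subst) : Finset ℕ := σ.foldr (fun p s => insert p.1 s) ∅

/-- free variables of the codomain -/
def Subst.codomFV (σ : Subst) : Finset ℕ := σ.foldr (fun p s => p.2.FV ∪ s) ∅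

/-- eigenvariables of the codomain -/
def Subst.codomEV (σ : Subst) : Finset ℕ := σ.foldr (fun p s => p.2.EV ∪ s) ∅

/-- `dom(σ) # codom(σ)` : the free variables in the codomain are disjoint from
the domain -/
def Subst.apart (σ : Subst) : Prop := Disjoint (Subst.dom σ) (Subst.codomFV σ)

/-- `agree(σ)` : any two bindings for the same variable are equivalent types -/
def Subst.agree (σ : Subst) : Prop :=
  ∀ a T T', (a, T) ∈ σ → (a, T') ∈ σ → TyEq T T'

/-- apply a substitution to a type -/
def applySubst (σ : Subst) (T : Ty) : Ty := σ.foldl (fun T p => T.substF p.1 p.2) T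

/-- semantic composition `σ₂·σ₁` of substitutions -/
def Subst.comp (σ₂ σ₁ : Subst) : Subst :=
  σ₁.map (fun p => (p.1, applySubst σ₂ p.2)) ++ σ₂

/-! ## Spines and iterated binders -/

/-- `spine h [T₁,…,Tₙ] = h T₁ … Tₙ` -/
def spine (h : Ty) (args : List Ty) : Ty := args.foldl .app h

/-- `lams [a₁,…,aₙ] T = λa₁.…λaₙ.T` -/
def lams (xs : List ℕ) (T : Ty) : Ty := xs.foldr .lam T

/-- `allList [a₁,…,aₙ] T = ∀a₁.…∀aₙ.T` -/
def allList (xs : List ℕ) (T : Ty) : Ty := xs.foldr .all T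

/-- `arrows [T₁,…,Tₙ] T = T₁ → … → Tₙ → T` -/
def arrows (Ts : List Ty) (T : Ty) : Ty := Ts.foldr .arrow T

/-- `πₙⁱ = λa₁.…λaₙ.aᵢ` (0-indexed `i < n`) -/
def projTy (n i : ℕ) : Ty := lams (List.range n) (.evar i)

/-- `θₙᵐ(C) = λa₁.…λaₙ. C (b₁ a₁ … aₙ) … (bₘ a₁ … aₙ)` with fresh free
variables `bs = [b₁,…,bₘ]` -/
def thetaTy (n : ℕ) (C : ℕ) (bs : List ℕ) : Ty :=
  lams (List.range n)
    (spine (.const C) (bs.map fun b => spine (.fvar b) ((List.range n).map .evar)))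

/-! ## Equation systems -/

/-- a finite collection of equations between types -/
abbrev Eqns := Multiset (Ty × Ty)

/-- free variables of an equation system -/
def Eqns.fvs (E : Eqns) : Finset ℕ := (E.map fun p => p.1.FV ∪ p.2.FV).sup

/-- eigenvariables of an equation system -/
def Eqns.evs (E : Eqns) : Finset ℕ := (E.map fun p => p.1.EV ∪ p.2.EV).sup

/-- apply a single binding to all equations -/
def substEqns (a : ℕ) (T : Ty) (E : Eqns) : Eqns :=
  E.map fun p => (p.1.substF a T, p.2.substF a T)

/-- a type which is a (free or eigen) variable -/
def IsVar : Ty → Prop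
  | .fvar _ => True
  | .evar _ => True
  | _ => False

/-! ## Dowek's bidirectional second-order matching

A transition system on triples `(E, V, σ)` where `E` is a set of equations,
`V` a set of eigenvariables and `σ` a substitution.  The parameter
`fo : ℕ → Bool` tells which free variables are first-order (of kind `*`). -/

inductive MStep (fo : ℕ → Bool) :
    Eqns × Finset ℕ × Subst → Eqns × Finset ℕ × Subst → Prop
  /-- (1) `({a = a} ∪ E, V, σ) → (E, V, σ)` -/
  | delete (v : Ty) (hv : IsVar v) (E V σ) :
      MStep fo ((v, v) ::ₘ E, V, σ) (E, V, σ)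
  /-- (2) `({a = T} ∪ E, V, σ) → ([T/a]E, V, [T/a]·σ)` for a first-order `a`,
  `a ∉ FV(T)`, `T ≢ a` -/
  | solve (a : ℕ) (T : Ty) (E V σ) (hfo : fo a = true) (ha : a ∉ T.FV)
      (hne : T ≠ .fvar a) :
      MStep fo ((.fvar a, T) ::ₘ E, V, σ) (substEqns a T E, V, (a, T) :: σ)
  /-- (3) `({T = a} ∪ E, V, σ) → ({a = T} ∪ E, V, σ)` -/
  | swap (T v : Ty) (hv : IsVar v) (E V σ) :
      MStep fo ((T, v) ::ₘ E, V, σ) ((v, T) ::ₘ E, V, σ)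
  /-- (4) `({∀a.T = ∀b.T'} ∪ E, V, σ) → ({[a'/a]T = [a'/b]T'} ∪ E, V ∪ {a'}, σ)`
  with `a'` a fresh eigenvariable -/
  | forallE (a b a' : ℕ) (T T' : Ty) (E V σ)
      (hfresh : a' ∉ V ∧ a' ∉ Eqns.evs (((.all a T : Ty), (.all b T' : Ty)) ::ₘ E) ∧
        a' ∉ Subst.codomEV σ) :
      MStep fo (((.all a T : Ty), (.all b T' : Ty)) ::ₘ E, V, σ)
        ((T.substE a (.evar a'), T'.substE b (.evar a')) ::ₘ E, insert a' V, σ)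
  /-- (5) `({C T₁ … Tₙ = C T₁' … Tₙ'} ∪ E, V, σ) → ({T₁ = T₁', …, Tₙ = Tₙ'} ∪ E, V, σ)` -/
  | decomp (C : ℕ) (Ts Ts' : List Ty) (hlen : Ts.length = Ts'.length) (E V σ) :
      MStep fo ((spine (.const C) Ts, spine (.const C) Ts') ::ₘ E, V, σ)
        ((Ts.zip Ts' : Multiset (Ty × Ty)) + E, V, σ)
  /-- (6) projection -/
  | proj (a : ℕ) (Ts Ts' : List Ty) (C : ℕ) (i : Fin Ts.length) (E V σ) :
      MStep fo ((spine (.fvar a) Ts, spine (.const C) Ts') ::ₘ E, V, σ)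
        ((Ts.get i, spine (.const C) Ts') ::ₘ E, V, (a, projTy Ts.length i.val) :: σ)
  /-- (7) imitation, with fresh free variables `bs = [b₁,…,bₘ]` -/
  | imi (a : ℕ) (Ts Ts' : List Ty) (C : ℕ) (bs : List ℕ) (E V σ)
      (hlen : bs.length = Ts'.length) (hnodup : bs.Nodup)
      (hfresh : ∀ b ∈ bs,
        b ∉ Eqns.fvs ((spine (.fvar a) Ts, spine (.const C) Ts') ::ₘ E) ∪
            Subst.dom σ ∪ Subst.codomFV σ) :
      MStep fo ((spine (.fvar a) Ts, spine (.const C) Ts') ::ₘ E, V, σ)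
        (((bs.map fun b => spine (.fvar b) Ts).zip Ts' : Multiset (Ty × Ty)) + E, V,
          (a, thetaTy Ts.length C bs) :: σ)
  /-- (8) exchange -/
  | exch (C : ℕ) (Ts' : List Ty) (a : ℕ) (Ts : List Ty) (E V σ) :
      MStep fo ((spine (.const C) Ts', spine (.fvar a) Ts) ::ₘ E, V, σ)
        ((spine (.fvar a) Ts, spine (.const C) Ts') ::ₘ E, V, σ)

/-- `T ∼_σ T'` : successful bidirectional matching of `T` against `T'`
producing unifier `σ` -/
def Matches (fo : ℕ → Bool) (T T' : Ty) (σ : Subst) : Prop :=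
  ∃ V : Finset ℕ,
    Relation.ReflTransGen (MStep fo) (({(T, T')} : Eqns), ∅, ([] : Subst))
      ((0 : Eqns), V, σ) ∧
    (∀ v ∈ V, v ∉ Subst.codomEV σ) ∧ Subst.apart σ ∧ Subst.agree σ

/-! ## System F_ω terms and typing -/

/-- annotated expressions `p ::= c | x | p p' | λx:T.p | λa.p | p T` -/
inductive Tm : Type
  | const : ℕ → Tm
  | var : ℕ → Tm
  | app : Tm → Tm → Tm
  | lam : ℕ → Ty → Tm → Tm
  | tlam : ℕ → Tm → Tm
  | tapp : Tm → Ty → Tm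

/-- unannotated expressions `e ::= c | x | e e' | λx.e` -/
inductive UTm : Type
  | const : ℕ → UTm
  | var : ℕ → UTm
  | app : UTm → UTm → UTm
  | lam : ℕ → UTm → UTm
  deriving DecidableEq

/-- erasure of type annotations -/
def eraseTm : Tm → UTm
  | .const c => .const c
  | .var x => .var x
  | .app p q => .app (eraseTm p) (eraseTm q)
  | .lam x _ p => .lam x (eraseTm p)
  | .tlam _ p => eraseTm p
  | .tapp p _ => eraseTm p

/-- keys of a typing environment: term variables or term constants -/
inductive EKey : Type
  | var : ℕ → EKey
  | con : ℕ → EKey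
  deriving DecidableEq

/-- typing environments `Γ ::= · | Γ, x : T | Γ, c : T` -/
abbrev Env := List (EKey × Ty)

/-- free type variables of an environment -/
def Env.FVs (Γ : Env) : Finset ℕ := Γ.foldr (fun p s => p.2.FV ∪ s) ∅

/-- eigenvariables of an environment -/
def Env.EVs (Γ : Env) : Finset ℕ := Γ.foldr (fun p s => p.2.EV ∪ s) ∅

/-- the typing judgement `Γ ⊢ p : T` of System F_ω -/
inductive HasType : Env → Tm → Ty → Prop
  | var {Γ : Env} {x T} : (EKey.var x, T) ∈ Γ → HasType Γ (.var x) T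
  | con {Γ : Env} {c T} : (EKey.con c, T) ∈ Γ → HasType Γ (.const c) T
  | app {Γ p₁ p₂ T T'} :
      HasType Γ p₁ (.arrow T' T) → HasType Γ p₂ T' → HasType Γ (.app p₁ p₂) T
  | lam {Γ : Env} {x T T' p} :
      HasType ((EKey.var x, T') :: Γ) p T → HasType Γ (.lam x T' p) (.arrow T' T)
  | tlam {Γ a p T} :
      HasType Γ p T → a ∉ Env.EVs Γ → HasType Γ (.tlam a p) (.all a T)
  | tapp {Γ p a T T'} :
      HasType Γ p (.all a T) → HasType Γ (.tapp p T') (T.substE a T')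
  | conv {Γ p T T'} : HasType Γ p T → TyEq T T' → HasType Γ p T'

/-- apply a type substitution to the annotations of a term -/
def substTm (σ : Subst) : Tm → Tm
  | .const c => .const c
  | .var x => .var x
  | .app p q => .app (substTm σ p) (substTm σ q)
  | .lam x T p => .lam x (applySubst σ T) (substTm σ p)
  | .tlam a p => .tlam a (substTm σ p)
  | .tapp p T => .tapp (substTm σ p) (applySubst σ T)

/-- apply a type substitution to an environment -/
def substEnv (σ : Subst) (Γ : Env) : Env := Γ.map fun p => (p.1, applySubst σ p.2)

/-! ## Scope environments -/

/-- a type variable: free (`f`) or eigen (`e`) -/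
inductive TV : Type
  | f : ℕ → TV
  | e : ℕ → TV
  deriving DecidableEq

/-- a scope environment: a list of pairs of a type variable and a scope value -/
abbrev ScopeEnv := List (TV × ℕ)

/-- `L(v)` : the (minimal) scope value of `v` in `L`, arbitrarily large (`⊤`)
if `v ∉ L` -/
noncomputable def sval (L : ScopeEnv) (v : TV) : ℕ∞ :=
  (L.filterMap fun p => if p.1 = v then some (p.2 : ℕ∞) else none).foldr min ⊤

/-- `max(L)` : the maximal scope value of `L` (`0` if `L` is empty) -/
def seMax (L : ScopeEnv) : ℕ := (L.map Prod.snd).foldr max 0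

/-- `fst(L)` : the variables occurring in `L` -/
def fstSE (L : ScopeEnv) : Finset TV := L.foldr (fun p s => insert p.1 s) ∅

/-- free variables recorded in `L` -/
def seFVs (L : ScopeEnv) : Finset ℕ :=
  L.foldr (fun p s => match p.1 with | TV.f a => insert a s | _ => s) ∅

/-- eigenvariables recorded in `L` -/
def seEVs (L : ScopeEnv) : Finset ℕ :=
  L.foldr (fun p s => match p.1 with | TV.e a => insert a s | _ => s) ∅

/-- the scope check `Scope(L, σ)`: whenever `a ∈ dom(σ)` and `(a, n) ∈ L`,
every eigenvariable `b ∈ EV(σa)` satisfies `(b, n') ∈ L` with `n' < n` -/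
def Scope (L : ScopeEnv) (σ : Subst) : Prop :=
  ∀ a T n, (a, T) ∈ σ → (TV.f a, n) ∈ L →
    ∀ b ∈ T.EV, ∃ n', (TV.e b, n') ∈ L ∧ n' < n

/-- updating one entry of `L`: an eigenvariable entry is kept; a free-variable
entry `(a, n)` is replaced by entries `(b, Mᵃ)` for `b ∈ FV(σa)` where
`Mᵃ = min {L(a), L(FV(σa))}` -/
noncomputable def updEntry (σ : Subst) (L : ScopeEnv) : TV × ℕ → List (TV × ℕ)
  | (TV.e b, n) => [(TV.e b, n)]
  | (TV.f a, n) =>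
      (applySubst σ (.fvar a)).FV.toList.map fun b =>
        (TV.f b,
          (min (n : ℕ∞)
            (((applySubst σ (.fvar a)).FV).inf fun c => sval L (TV.f c))).toNat)

/-- `|L|` : the same variables as `L`, with every variable receiving its
minimal scope value -/
noncomputable def normSE (L : ScopeEnv) : ScopeEnv := L.map fun p => (p.1, (sval L p.1).toNat)

/-- the update `σL` of a scope environment by a substitution:
`σL = |L''| + L_eigen` -/
noncomputable def updSE (σ : Subst) (L : ScopeEnv) : ScopeEnv :=
  normSE ((L.filter fun p => match p.1 with | TV.f _ => true | _ => false).flatMap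
      (updEntry σ L)) ++
    L.filter fun p => match p.1 with | TV.e _ => true | _ => false

/-! ## The type checking transition system -/

/-- a tuple of the type checking algorithm: either a goal `(L, Γ, e, T)` or a
finished tuple `(L, Γ, ◇, ◇)` -/
inductive Task : Type
  | goal : ScopeEnv → Env → UTm → Ty → Task
  | done : ScopeEnv → Env → Task

def Task.scopeEnv : Task → ScopeEnv
  | .goal L _ _ _ => L
  | .done L _ => L

/-- apply a substitution to a tuple (updating its scope environment) -/
noncomputable def substTask (σ : Subst) : Task → Task
  | .goal L Γ e T => .goal (updSE σ L) (substEnv σ Γ) e (applySubst σ T)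
  | .done L Γ => .done (updSE σ L) (substEnv σ Γ)

/-- `(x|c) : T ∈ Γ` for a variable or constant -/
def AtomTy (Γ : Env) : UTm → Ty → Prop
  | .var x, T => (EKey.var x, T) ∈ Γ
  | .const c, T => (EKey.con c, T) ∈ Γ
  | _, _ => False

/-- `uspine h [e₁,…,eₙ] = h e₁ … eₙ` -/
def uspine (h : UTm) (es : List UTm) : UTm := es.foldl .app h

/-- `ulams [x₁,…,xₙ] e = λx₁.…λxₙ.e` -/
def ulams (xs : List ℕ) (e : UTm) : UTm := xs.foldr .lam e

def notLam : UTm → Prop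
  | .lam _ _ => False
  | _ => True

/-- instantiate the (eigen-named) binders `bs` by the types `Ss` -/
def instL (bs : List ℕ) (Ss : List Ty) (T : Ty) : Ty :=
  (bs.zip Ss).foldl (fun T p => T.substE p.1 p.2) T

def Task.FVs : Task → Finset ℕ
  | .goal L Γ _ T => seFVs L ∪ Env.FVs Γ ∪ T.FV
  | .done L Γ => seFVs L ∪ Env.FVs Γ

def Task.EVs : Task → Finset ℕ
  | .goal L Γ _ T => seEVs L ∪ Env.EVs Γ ∪ T.EV
  | .done L Γ => seEVs L ∪ Env.EVs Γ

/-- all free variables of a state (used for freshness) -/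
def stateFVs (Ψ : Multiset Task) (σ : Subst) : Finset ℕ :=
  (Ψ.map Task.FVs).sup ∪ Subst.dom σ ∪ Subst.codomFV σ

/-- all eigenvariables of a state (used for freshness) -/
def stateEVs (Ψ : Multiset Task) (σ : Subst) : Finset ℕ :=
  (Ψ.map Task.EVs).sup ∪ Subst.codomEV σ

/-- The type checking algorithm: a transition system on pairs `(Ψ, σ)`. -/
inductive TStep (fo : ℕ → Bool) :
    Multiset Task × Subst → Multiset Task × Subst → Prop
  /-- `→ₛ` : checking a variable or a constant `(x|c)` with
  `(x|c) : ∀a₁…∀aₖ.T' ∈ Γ` against `T`, via `T' ∼_{σ'} T` -/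
  | varConst (L : ScopeEnv) (Γ : Env) (u : UTm) (T : Ty)
      (bs : List ℕ) (T₀ : Ty) (as : List ℕ) (σ' : Subst) (Ψ : Multiset Task) (σ : Subst)
      (hatom : AtomTy Γ u (allList bs T₀))
      (hlen : as.length = bs.length) (hnodup : as.Nodup)
      (hfresh : ∀ x ∈ as, x ∉ stateFVs (Task.goal L Γ u T ::ₘ Ψ) σ)
      (hmatch : Matches fo (instL bs (as.map .fvar) T₀) T σ')
      (hscope : Scope L σ')
      (hscopeΨ : ∀ t ∈ Ψ, Scope t.scopeEnv σ') :
      TStep fo (Task.goal L Γ u T ::ₘ Ψ, σ)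
        (Task.done (updSE σ' (L ++ as.map fun a => (TV.f a, seMax L + 1)))
            (substEnv σ' Γ) ::ₘ Ψ.map (substTask σ'),
          σ' ++ σ)
  /-- `→ᵢ` : checking `λx₁.…λxₙ.e e₁ … eₖ` against `∀a₁.…∀aₘ.T₁,…,Tₙ → T`
  with `m > 0`: abstract the outermost quantified variables as fresh
  eigenvariables and strip the λ-abstractions -/
  | intro (L : ScopeEnv) (Γ : Env) (xs : List ℕ) (body : UTm)
      (bs : List ℕ) (U : Ty) (cs : List ℕ) (Ts : List Ty) (T : Ty)
      (Ψ : Multiset Task) (σ : Subst)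
      (hm : 0 < bs.length)
      (hlen : cs.length = bs.length) (hnodup : cs.Nodup)
      (hbody : notLam body)
      (hfresh : ∀ c ∈ cs,
        c ∉ stateEVs (Task.goal L Γ (ulams xs body) (allList bs U) ::ₘ Ψ) σ)
      (hopen : instL bs (cs.map .evar) U = arrows Ts T)
      (hxs : xs.length = Ts.length) :
      TStep fo (Task.goal L Γ (ulams xs body) (allList bs U) ::ₘ Ψ, σ)
        (Task.goal (L ++ cs.zipIdx.map fun p => (TV.e p.1, seMax L + 1 + p.2))
            ((xs.zip Ts).map (fun p => (EKey.var p.1, p.2)) ++ Γ) body T ::ₘ Ψ,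
          σ)
  /-- `→ₐ` : checking an (over-)application `(x|c) e₁ … eₙ` against `T` with
  `(x|c) : ∀a₁…∀aₖ.T₁',…,T_l' → T' ∈ Γ`, `l ≤ n`, via
  `T' ∼_{σ'} (b₁,…,b_{n−l} → T)` with fresh free variables `b₁,…,b_{n−l}` -/
  | overApp (L : ScopeEnv) (Γ : Env) (u : UTm) (es₁ es₂ : List UTm) (T : Ty)
      (bs : List ℕ) (Ts' : List Ty) (T' : Ty) (as bjs : List ℕ) (σ' : Subst)
      (Ψ : Multiset Task) (σ : Subst)
      (hn : 0 < es₁.length + es₂.length)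
      (hatom : AtomTy Γ u (allList bs (arrows Ts' T')))
      (hl : es₁.length = Ts'.length) (hbj : bjs.length = es₂.length)
      (hlen : as.length = bs.length) (hnodup : (as ++ bjs).Nodup)
      (hfresh : ∀ x ∈ as ++ bjs,
        x ∉ stateFVs (Task.goal L Γ (uspine u (es₁ ++ es₂)) T ::ₘ Ψ) σ)
      (hmatch : Matches fo (instL bs (as.map .fvar) T')
        (arrows (bjs.map .fvar) T) σ')
      (hscope : Scope L σ')
      (hscopeΨ : ∀ t ∈ Ψ, Scope t.scopeEnv σ') :
      TStep fo (Task.goal L Γ (uspine u (es₁ ++ es₂)) T ::ₘ Ψ, σ)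
        (((es₁.zip Ts').map fun p =>
            Task.goal (updSE σ' (L ++ (as ++ bjs).map fun x => (TV.f x, seMax L + 1)))
              (substEnv σ' Γ) p.1 (applySubst σ' (instL bs (as.map .fvar) p.2))
            : Multiset Task) +
          ((es₂.zip bjs).map fun p =>
            Task.goal (updSE σ' (L ++ (as ++ bjs).map fun x => (TV.f x, seMax L + 1)))
              (substEnv σ' Γ) p.1 (applySubst σ' (.fvar p.2))
            : Multiset Task) +
          Ψ.map (substTask σ'),
          σ' ++ σ)
  /-- `→_b` : checking a partial application `(x|c) e₁ … eₙ` against `T` with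
  `(x|c) : ∀a₁…∀aₖ.T₁',…,T_l' → T' ∈ Γ`, `0 < n < l`, via
  `(T_{n+1}',…,T_l' → T') ∼_{σ'} T` -/
  | partialApp (L : ScopeEnv) (Γ : Env) (u : UTm) (es : List UTm) (T : Ty)
      (bs : List ℕ) (Ts' : List Ty) (T' : Ty) (as : List ℕ) (σ' : Subst)
      (Ψ : Multiset Task) (σ : Subst)
      (hn : 0 < es.length) (hl : es.length < Ts'.length)
      (hatom : AtomTy Γ u (allList bs (arrows Ts' T')))
      (hlen : as.length = bs.length) (hnodup : as.Nodup)
      (hfresh : ∀ x ∈ as, x ∉ stateFVs (Task.goal L Γ (uspine u es) T ::ₘ Ψ) σ)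
      (hmatch : Matches fo
        (instL bs (as.map .fvar) (arrows (Ts'.drop es.length) T')) T σ')
      (hscope : Scope L σ')
      (hscopeΨ : ∀ t ∈ Ψ, Scope t.scopeEnv σ') :
      TStep fo (Task.goal L Γ (uspine u es) T ::ₘ Ψ, σ)
        (((es.zip Ts').map fun p =>
            Task.goal (updSE σ' (L ++ as.map fun x => (TV.f x, seMax L + 1)))
              (substEnv σ' Γ) p.1 (applySubst σ' (instL bs (as.map .fvar) p.2))
            : Multiset Task) +
          Ψ.map (substTask σ'),
          σ' ++ σ)

/-- a tuple whose scope environment records all its free type variables -/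
def recorded : Task → Prop
  | .goal L Γ _ T => ∀ a ∈ Env.FVs Γ ∪ T.FV, TV.f a ∈ fstSE L
  | .done L Γ => ∀ a ∈ Env.FVs Γ, TV.f a ∈ fstSE L


/-! Every rule except `→ᵢ` without λ-abstractions replaces a goal by goals on proper
subexpressions (or discharges it), so the total size of the expressions to be checked
drops; substitutions in the other tuples change types, never expressions. The remaining
case of `→ᵢ` keeps the expression but strips at least one quantifier from the goal type
(instantiating binders by eigenvariables does not increase size). Hence the pair
(total expression size, total goal type size) decreases lexicographically at every step. -/

theorem sum_map_zip_fst {α β M : Type*} [AddMonoid M] (f : α → M) {l₁ : List α}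
    {l₂ : List β} (h : l₁.length ≤ l₂.length) :
    ((l₁.zip l₂).map fun p => f p.1).sum = (l₁.map f).sum := by
  conv_rhs => rw [← List.map_fst_zip h, List.map_map]
  rfl

namespace UTm

def size : UTm → ℕ
  | const _ => 1
  | var _ => 1
  | app e e' => e.size + e'.size + 1
  | lam _ e => e.size + 1

theorem size_pos (e : UTm) : 0 < e.size := by
  cases e <;> simp [size]

end UTm

theorem size_ulams (xs : List ℕ) (e : UTm) : (ulams xs e).size = xs.length + e.size := by
  induction xs with
  | nil => simp [ulams]
  | cons x xs ih =>
    simp only [ulams, List.foldr_cons, UTm.size] at *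
    rw [ih, List.length_cons]
    omega

theorem size_uspine (h : UTm) (es : List UTm) :
    (uspine h es).size = h.size + (es.map UTm.size).sum + es.length := by
  induction es generalizing h with
  | nil => simp [uspine]
  | cons e es ih =>
    simp only [uspine, List.foldl_cons] at *
    rw [ih, UTm.size, List.map_cons, List.sum_cons, List.length_cons]
    omega

theorem Ty.size_pos (T : Ty) : 0 < T.size := by
  cases T <;> simp [Ty.size]

theorem size_allList (bs : List ℕ) (T : Ty) : (allList bs T).size = bs.length + T.size := by
  induction bs with
  | nil => simp [allList]
  | cons b bs ih =>
    simp only [allList, List.foldr_cons, Ty.size] at *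
    rw [ih, List.length_cons]
    omega

theorem Ty.size_substE_evar_le (a c : ℕ) (S : Ty) : (Ty.substE a S (.evar c)).size ≤ S.size := by
  simp only [Ty.substE]
  split
  · exact le_rfl
  · exact S.size_pos

/- Dot notation makes the accumulated type the *substituted* argument of `Ty.substE` in
`instL`: `T.substE b S = Ty.substE b T S`. -/
theorem size_instL_evars_le (bs cs : List ℕ) (U : Ty) :
    (instL bs (cs.map .evar) U).size ≤ U.size := by
  induction bs generalizing cs U with
  | nil => simp [instL]
  | cons b bs ih =>
    cases cs with
    | nil => simp [instL]
    | cons c cs =>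
      exact (ih cs _).trans (Ty.size_substE_evar_le b c U)

namespace Task

def exprSize : Task → ℕ
  | goal _ _ e _ => e.size
  | done _ _ => 0

def typeSize : Task → ℕ
  | goal _ _ _ T => T.size
  | done _ _ => 0

@[simp]
theorem exprSize_substTask (σ : Subst) (t : Task) : (substTask σ t).exprSize = t.exprSize := by
  cases t <;> rfl

end Task

def exprWeight (Ψ : Multiset Task) : ℕ := (Ψ.map Task.exprSize).sum

def typeWeight (Ψ : Multiset Task) : ℕ := (Ψ.map Task.typeSize).sum

def checkMeasure (Ψ : Multiset Task) : ℕ ×ₗ ℕ := toLex (exprWeight Ψ, typeWeight Ψ)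

@[simp]
theorem exprWeight_cons (t : Task) (Ψ : Multiset Task) :
    exprWeight (t ::ₘ Ψ) = t.exprSize + exprWeight Ψ := by
  simp [exprWeight]

@[simp]
theorem exprWeight_add (Ψ Ψ' : Multiset Task) :
    exprWeight (Ψ + Ψ') = exprWeight Ψ + exprWeight Ψ' := by
  simp [exprWeight]

@[simp]
theorem exprWeight_map_substTask (σ : Subst) (Ψ : Multiset Task) :
    exprWeight (Ψ.map (substTask σ)) = exprWeight Ψ := by
  simp [exprWeight]

theorem exprWeight_zip_goals {α : Type*} (es : List UTm) (l : List α) (h : es.length ≤ l.length)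
    (L : ScopeEnv) (Γ : Env) (T : UTm × α → Ty) :
    exprWeight (((es.zip l).map fun p => Task.goal L Γ p.1 (T p) : List Task) : Multiset Task)
      = (es.map UTm.size).sum := by
  simp only [exprWeight, Multiset.map_coe, Multiset.sum_coe, List.map_map, Function.comp_def,
    Task.exprSize]
  exact sum_map_zip_fst UTm.size h

theorem checkMeasure_lt_of_exprWeight_lt {Ψ Ψ' : Multiset Task}
    (h : exprWeight Ψ' < exprWeight Ψ) : checkMeasure Ψ' < checkMeasure Ψ :=
  Prod.Lex.toLex_lt_toLex.mpr (Or.inl h)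

theorem TStep.checkMeasure_lt {fo : ℕ → Bool} {s t : Multiset Task × Subst} (h : TStep fo s t) :
    checkMeasure t.1 < checkMeasure s.1 := by
  cases h with
  | varConst _ _ u =>
    apply checkMeasure_lt_of_exprWeight_lt
    have := u.size_pos
    simp only [exprWeight_cons, exprWeight_map_substTask, Task.exprSize]
    omega
  | intro _ _ xs body bs U cs Ts T _ _ hm _ _ _ _ hopen hxs =>
    rcases xs with _ | ⟨x, xs⟩
    · have hT : T = instL bs (cs.map .evar) U := by
        obtain rfl : Ts = [] := List.length_eq_zero_iff.mp hxs.symm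
        exact hopen.symm
      refine Prod.Lex.toLex_lt_toLex.mpr (Or.inr ⟨?_, ?_⟩)
      · simp [exprWeight, Task.exprSize, ulams]
      · have := size_instL_evars_le bs cs U
        subst hT
        simp only [typeWeight, Multiset.map_cons, Multiset.sum_cons, Task.typeSize, size_allList]
        omega
    · apply checkMeasure_lt_of_exprWeight_lt
      simp only [exprWeight_cons, Task.exprSize, size_ulams, List.length_cons]
      omega
  | overApp _ _ u es₁ es₂ _ _ _ _ _ _ _ _ _ hn _ hl hbj =>
    apply checkMeasure_lt_of_exprWeight_lt
    have := u.size_pos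
    simp only [exprWeight_cons, exprWeight_add, exprWeight_map_substTask, Task.exprSize,
      exprWeight_zip_goals _ _ hl.le, exprWeight_zip_goals _ _ hbj.ge, size_uspine,
      List.map_append, List.sum_append, List.length_append]
    omega
  | partialApp _ _ u es _ _ _ _ _ _ _ _ hn hl =>
    apply checkMeasure_lt_of_exprWeight_lt
    have := u.size_pos
    simp only [exprWeight_cons, exprWeight_add, exprWeight_map_substTask, Task.exprSize,
      exprWeight_zip_goals _ _ hl.le, size_uspine]
    omega

/-- **Termination of the type checking transition system**: there is no
infinite sequence of transitions `(Ψ, σ) → (Ψ', σ') → ⋯` of the type checking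
algorithm. -/
theorem typechecking_terminating (fo : ℕ → Bool) :
    ¬ ∃ f : ℕ → Multiset Task × Subst, ∀ n, TStep fo (f n) (f (n + 1)) := by
  rintro ⟨f, hf⟩
  exact not_strictAnti_of_wellFoundedLT (fun n => checkMeasure (f n).1)
    (strictAnti_nat_of_succ_lt fun n => (hf n).checkMeasure_lt)

end Paper
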